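/- Let Ω₀, Ω₁ ⊂ ℝⁿ be compact sets, and let f, g be real-valued C² functions defined on neighborhoods of Ω₀, Ω₁ respectively, with g(y) > f(x) for all (x,y) ∈ Ω₀ × Ω₁. Let c(x,y) = √((f(x) − g(y))² + |x − y|²). Suppose there are constants α₁, α₂ > 0 with 1 − α₁ (2 + α₂² + α₁) > 0 such that for all (x,y) ∈ Ω₀ × Ω₁: |(x − y)·∇g(y)| ≤ α₁ (g(y) − f(x)), |(x − y)·∇f(x)| ≤ α₁ (g(y) − f(x)), and |∇f(x)| + |∇g(y)| ≤ α₂. Then det (∂²c/∂xᵢ∂y_j)(x,y) ≠ 0 for every (x,y) ∈ Ω₀ × Ω₁. -/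

import Mathlib

open scoped RealInnerProductSpace Topology

/-!
Differentiating `c(x, y) = √((f x - g y)² + |x - y|²)` once in `y` and once in `x` gives, with
`s = f x - g y`, `q = x - y` and `r = c(x, y)`,
`∂²c/∂xᵢ∂yⱼ = -r⁻¹ (δᵢⱼ + ∂ᵢf ∂ⱼg - (s ∂ᵢf + qᵢ)(s ∂ⱼg + qⱼ) / r²)`,
a rank-two perturbation of a multiple of the identity. Its determinant reduces to a `2 × 2` one
and equals `(-r⁻¹)ⁿ (s - q·∇f)(s - q·∇g) / r²`. Since `s < 0` and `|q·∇f|, |q·∇g| ≤ α₁ |s|` with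
`α₁ < 1`, both factors are negative.
-/

namespace Matrix

theorem det_one_add_vecMulVec_sub_vecMulVec {ι R : Type*} [Fintype ι] [DecidableEq ι]
    [CommRing R] (a b w z : ι → R) :
    det (1 + vecMulVec a b - vecMulVec w z) =
      (1 + b ⬝ᵥ a) * (1 - z ⬝ᵥ w) + (b ⬝ᵥ w) * (z ⬝ᵥ a) := by
  have hfactor : vecMulVec a b - vecMulVec w z = (of ![a, -w])ᵀ * of ![b, z] := by
    ext i j
    simp [mul_apply, Fin.sum_univ_two, vecMulVec_apply, sub_eq_add_neg]
  have h2x2 : 1 + of ![b, z] * (of ![a, -w])ᵀ =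
      !![1 + b ⬝ᵥ a, -(b ⬝ᵥ w); z ⬝ᵥ a, 1 - z ⬝ᵥ w] := by
    ext k l
    fin_cases k <;> fin_cases l <;> simp [vecMul, dotProduct, sub_eq_add_neg]
  rw [add_sub_assoc, hfactor, det_one_add_mul_comm, h2x2, det_fin_two_of]
  ring

theorem det_one_add_vecMulVec_sub_inv_smul_vecMulVec {ι K : Type*} [Fintype ι]
    [DecidableEq ι] [Field K] (a b q : ι → K) (s : K) (hD : s ^ 2 + q ⬝ᵥ q ≠ 0) :
    det (1 + vecMulVec a b - (s ^ 2 + q ⬝ᵥ q)⁻¹ • vecMulVec (s • a + q) (s • b + q)) =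
      (s - q ⬝ᵥ a) * (s - q ⬝ᵥ b) / (s ^ 2 + q ⬝ᵥ q) := by
  rw [← smul_vecMulVec, det_one_add_vecMulVec_sub_vecMulVec]
  simp only [dotProduct_add, add_dotProduct, dotProduct_smul, smul_dotProduct, smul_eq_mul,
    dotProduct_comm q a, dotProduct_comm b a, dotProduct_comm b q]
  field_simp
  ring

end Matrix

theorem HasFDerivAt.sqrt_sq_add_norm_sq {E F : Type*} [NormedAddCommGroup E] [NormedSpace ℝ E]
    [NormedAddCommGroup F] [InnerProductSpace ℝ F] {p : E → ℝ} {q : E → F} {p' : E →L[ℝ] ℝ}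
    {q' : E →L[ℝ] F} {z : E} (hp : HasFDerivAt p p' z) (hq : HasFDerivAt q q' z)
    (h : p z ^ 2 + ‖q z‖ ^ 2 ≠ 0) :
    HasFDerivAt (fun z => √(p z ^ 2 + ‖q z‖ ^ 2))
      ((√(p z ^ 2 + ‖q z‖ ^ 2))⁻¹ • (p z • p' + (innerSL ℝ (q z)).comp q')) z := by
  refine (((hp.pow 2).add hq.norm_sq).sqrt h).congr_fderiv ?_
  ext u
  simp [field]

noncomputable def cost {E : Type*} [NormedAddCommGroup E] (f g : E → ℝ) (x y : E) : ℝ :=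
  √((f x - g y) ^ 2 + ‖x - y‖ ^ 2)

section Cost

variable {E : Type*} [NormedAddCommGroup E] [InnerProductSpace ℝ E]
  {f g : E → ℝ} {f' g' : E →L[ℝ] ℝ} {x y : E}

theorem hasFDerivAt_cost_left (hf : HasFDerivAt f f' x) (hc : cost f g x y ≠ 0) :
    HasFDerivAt (fun x' => cost f g x' y)
      ((cost f g x y)⁻¹ • ((f x - g y) • f' + innerSL ℝ (x - y))) x :=
  ((hf.sub_const (g y)).sqrt_sq_add_norm_sq ((hasFDerivAt_id x).sub_const y)
    (Real.sqrt_ne_zero'.1 hc).ne').congr_fderiv (by ext u; simp [cost])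

theorem hasFDerivAt_cost_right (hg : HasFDerivAt g g' y) (hc : cost f g x y ≠ 0) :
    HasFDerivAt (cost f g x)
      (-(cost f g x y)⁻¹ • ((f x - g y) • g' + innerSL ℝ (x - y))) y :=
  ((hg.const_sub (f x)).sqrt_sq_add_norm_sq ((hasFDerivAt_id y).const_sub x)
    (Real.sqrt_ne_zero'.1 hc).ne').congr_fderiv (by ext u; simp [cost, mul_sub])

theorem fderiv_fderiv_cost_apply (hf : HasFDerivAt f f' x) (hg : HasFDerivAt g g' y)
    (hc : cost f g x y ≠ 0) (u v : E) :
    fderiv ℝ (fun x' => fderiv ℝ (cost f g x') y v) x u =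
      -(cost f g x y)⁻¹ * (⟪u, v⟫ + f' u * g' v -
        ((f x - g y) * f' u + ⟪x - y, u⟫) * ((f x - g y) * g' v + ⟪x - y, v⟫) /
          cost f g x y ^ 2) := by
  have hleft := hasFDerivAt_cost_left (g := g) hf hc
  have hderiv_right : (fun x' => fderiv ℝ (cost f g x') y v) =ᶠ[𝓝 x]
      fun x' => -(cost f g x' y)⁻¹ * ((f x' - g y) * g' v + ⟪x' - y, v⟫) := by
    filter_upwards [hleft.continuousAt.eventually_ne hc] with x' hx'
    simp only [(hasFDerivAt_cost_right hg hx').fderiv, smul_apply, add_apply,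
      innerSL_apply_apply, smul_eq_mul, neg_mul]
  have hnum : HasFDerivAt (fun x' => (f x' - g y) * g' v + ⟪x' - y, v⟫)
      (g' v • f' + innerSL ℝ v) x :=
    (((hf.sub_const (g y)).mul_const (g' v)).add
      (((hasFDerivAt_id x).sub_const y).inner ℝ (hasFDerivAt_const v x))).congr_fderiv
      (by ext u; simp [real_inner_comm, mul_comm])
  have hprod : HasFDerivAt
      (fun x' => -(cost f g x' y)⁻¹ * ((f x' - g y) * g' v + ⟪x' - y, v⟫)) _ x :=
    (((hasDerivAt_inv hc).comp_hasFDerivAt x hleft).neg).mul hnum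
  rw [hderiv_right.fderiv_eq, hprod.fderiv]
  simp only [Pi.neg_apply, Function.comp_apply, add_apply, neg_apply, smul_apply, smul_eq_mul,
    coe_innerSL_apply, real_inner_comm v u]
  field_simp
  ring

end Cost

theorem EuclideanSpace.fderiv_single_eq_gradient {ι : Type*} [Fintype ι] [DecidableEq ι]
    (h : EuclideanSpace ℝ ι → ℝ) (z : EuclideanSpace ℝ ι) (i : ι) :
    fderiv ℝ h z (EuclideanSpace.single i 1) = (gradient h z).ofLp i := by
  rw [← inner_gradient_left, EuclideanSpace.inner_single_right, one_mul, conj_trivial]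

open Matrix in
theorem det_fderiv_fderiv_cost {ι : Type*} [Fintype ι] [DecidableEq ι]
    {f g : EuclideanSpace ℝ ι → ℝ} {x y : EuclideanSpace ℝ ι}
    (hf : DifferentiableAt ℝ f x) (hg : DifferentiableAt ℝ g y) (hc : cost f g x y ≠ 0) :
    det (of fun i j => fderiv ℝ (fun x' => fderiv ℝ (cost f g x') y
        (EuclideanSpace.single j 1)) x (EuclideanSpace.single i 1)) =
      (-(cost f g x y)⁻¹) ^ Fintype.card ι *
        ((f x - g y - ⟪x - y, gradient f x⟫) * (f x - g y - ⟪x - y, gradient g y⟫) /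
          cost f g x y ^ 2) := by
  set s := f x - g y
  set q := (x - y).ofLp
  have hinner (v w : EuclideanSpace ℝ ι) : ⟪v, w⟫ = v.ofLp ⬝ᵥ w.ofLp := by
    rw [EuclideanSpace.inner_eq_star_dotProduct, star_trivial, dotProduct_comm]
  have hsq : cost f g x y ^ 2 = s ^ 2 + q ⬝ᵥ q := by
    rw [cost, Real.sq_sqrt (by positivity), ← real_inner_self_eq_norm_sq, hinner]
  have hmatrix : (of fun i j => fderiv ℝ (fun x' => fderiv ℝ (cost f g x') y
        (EuclideanSpace.single j 1)) x (EuclideanSpace.single i 1)) =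
      (-(cost f g x y)⁻¹) • (1 + vecMulVec (gradient f x).ofLp (gradient g y).ofLp -
        (s ^ 2 + q ⬝ᵥ q)⁻¹ •
          vecMulVec (s • (gradient f x).ofLp + q) (s • (gradient g y).ofLp + q)) := by
    ext i j
    rw [of_apply, fderiv_fderiv_cost_apply hf.hasFDerivAt hg.hasFDerivAt hc, hsq]
    simp only [EuclideanSpace.fderiv_single_eq_gradient, EuclideanSpace.inner_single_right,
      PiLp.single_apply, conj_trivial, Matrix.smul_apply, Matrix.sub_apply, Matrix.add_apply,
      one_apply, vecMulVec_apply, Pi.add_apply, Pi.smul_apply, smul_eq_mul, q, s, eq_comm]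
    ring
  rw [hmatrix, det_smul,
    det_one_add_vecMulVec_sub_inv_smul_vecMulVec _ _ _ _ (hsq ▸ pow_ne_zero 2 hc),
    hinner, hinner, hsq]

theorem det_nonzero_general_g_general {n : ℕ}
    (Ω₀ Ω₁ : Set (EuclideanSpace ℝ (Fin n)))
    (f g : EuclideanSpace ℝ (Fin n) → ℝ)
    (U V : Set (EuclideanSpace ℝ (Fin n))) (hU : IsOpen U) (hV : IsOpen V)
    (hΩU : Ω₀ ⊆ U) (hΩV : Ω₁ ⊆ V)
    (hf : ContDiffOn ℝ 2 f U) (hg : ContDiffOn ℝ 2 g V)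
    (hsep : ∀ x ∈ Ω₀, ∀ y ∈ Ω₁, f x < g y)
    (α₁ α₂ : ℝ)
    (hsmall : 0 < 1 - α₁ * (2 + α₂ ^ 2 + α₁))
    (h₁ : ∀ x ∈ Ω₀, ∀ y ∈ Ω₁, |⟪x - y, gradient g y⟫| ≤ α₁ * (g y - f x))
    (h₂ : ∀ x ∈ Ω₀, ∀ y ∈ Ω₁, |⟪x - y, gradient f x⟫| ≤ α₁ * (g y - f x)) :
    ∀ x ∈ Ω₀, ∀ y ∈ Ω₁,
      Matrix.det (Matrix.of fun i j : Fin n =>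
        fderiv ℝ (fun x' => fderiv ℝ
            (fun y' => Real.sqrt ((f x' - g y') ^ 2 + ‖x' - y'‖ ^ 2)) y
            (EuclideanSpace.single j 1)) x (EuclideanSpace.single i 1)) ≠ 0 := by
  intro x hx y hy
  have hfx : DifferentiableAt ℝ f x :=
    (hf.contDiffAt (hU.mem_nhds (hΩU hx))).differentiableAt two_ne_zero
  have hgy : DifferentiableAt ℝ g y :=
    (hg.contDiffAt (hV.mem_nhds (hΩV hy))).differentiableAt two_ne_zero
  have hgap : f x - g y < 0 := sub_neg.2 (hsep x hx y hy)
  have hc : cost f g x y ≠ 0 := Real.sqrt_ne_zero'.2 (by nlinarith [sq_nonneg ‖x - y‖])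
  have hα₁_lt_one : α₁ < 1 := by nlinarith [sq_nonneg α₂]
  have hfactor_f : f x - g y - ⟪x - y, gradient f x⟫ < 0 := by
    nlinarith [(abs_le.1 (h₂ x hx y hy)).1]
  have hfactor_g : f x - g y - ⟪x - y, gradient g y⟫ < 0 := by
    nlinarith [(abs_le.1 (h₁ x hx y hy)).1]
  refine (det_fderiv_fderiv_cost hfx hgy hc).trans_ne ?_
  exact mul_ne_zero (pow_ne_zero _ (neg_ne_zero.2 (inv_ne_zero hc)))
    (div_ne_zero (mul_ne_zero hfactor_f.ne hfactor_g.ne) (pow_ne_zero 2 hc))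

/-- For the cost `c(x,y) = √((f(x) − g(y))² + |x − y|²)` with `f, g` of class
`C²` on neighborhoods of the compact sets `Ω₀, Ω₁` and `g > f` on `Ω₀ × Ω₁`: if there are
constants `α₁, α₂ > 0` with `1 − α₁(2 + α₂² + α₁) > 0` such that
`|(x − y)·∇g(y)| ≤ α₁(g(y) − f(x))`, `|(x − y)·∇f(x)| ≤ α₁(g(y) − f(x))` and
`|∇f(x)| + |∇g(y)| ≤ α₂` for all `(x,y) ∈ Ω₀ × Ω₁`, then the determinant of the matrix of
mixed second partials of `c` is nonzero at every `(x,y) ∈ Ω₀ × Ω₁`. -/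
theorem det_nonzero_general_g {n : ℕ}
    (Ω₀ Ω₁ : Set (EuclideanSpace ℝ (Fin n)))
    (hΩ₀ : IsCompact Ω₀) (hΩ₁ : IsCompact Ω₁)
    (f g : EuclideanSpace ℝ (Fin n) → ℝ)
    (U V : Set (EuclideanSpace ℝ (Fin n))) (hU : IsOpen U) (hV : IsOpen V)
    (hΩU : Ω₀ ⊆ U) (hΩV : Ω₁ ⊆ V)
    (hf : ContDiffOn ℝ 2 f U) (hg : ContDiffOn ℝ 2 g V)
    (hsep : ∀ x ∈ Ω₀, ∀ y ∈ Ω₁, f x < g y)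
    (α₁ α₂ : ℝ) (hα₁ : 0 < α₁) (hα₂ : 0 < α₂)
    (hsmall : 0 < 1 - α₁ * (2 + α₂ ^ 2 + α₁))
    (h₁ : ∀ x ∈ Ω₀, ∀ y ∈ Ω₁, |⟪x - y, gradient g y⟫| ≤ α₁ * (g y - f x))
    (h₂ : ∀ x ∈ Ω₀, ∀ y ∈ Ω₁, |⟪x - y, gradient f x⟫| ≤ α₁ * (g y - f x))
    (h₃ : ∀ x ∈ Ω₀, ∀ y ∈ Ω₁, ‖gradient f x‖ + ‖gradient g y‖ ≤ α₂) :
    ∀ x ∈ Ω₀, ∀ y ∈ Ω₁,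
      Matrix.det (Matrix.of fun i j : Fin n =>
        fderiv ℝ (fun x' => fderiv ℝ
            (fun y' => Real.sqrt ((f x' - g y') ^ 2 + ‖x' - y'‖ ^ 2)) y
            (EuclideanSpace.single j 1)) x (EuclideanSpace.single i 1)) ≠ 0 :=
  det_nonzero_general_g_general Ω₀ Ω₁ f g U V hU hV hΩU hΩV hf hg hsep α₁ α₂ hsmall h₁ h₂
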